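/- Let γ₁, γ₂, γ₃ be three roots of a root system Φ spanning a rank-3 subsystem Ψ with the property: whenever η = n₁γ₁ + n₂γ₂ + n₃γ₃ ∈ Ψ, then η − n₃γ₃ is proportional to a root of Φ. Then for any root η of Φ lying in Ψ, the intersection of the ℂ-spans ⟨γ₁,γ₂⟩_ℂ ∩ ⟨γ₃,η⟩_ℂ is either {0} or is spanned by a root. -/

import Mathlib

/-! Write `η = α + n₃ • γ₃` with `α = n₁ • γ₁ + n₂ • γ₂`. Then `⟨γ₃, η⟩ = ⟨γ₃, α⟩`, and since
`α ∈ ⟨γ₁, γ₂⟩` while `γ₃` is independent of `⟨γ₁, γ₂⟩`, the modular law gives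
`⟨γ₁, γ₂⟩ ∩ ⟨γ₃, α⟩ = ⟨α⟩`. By hypothesis `α` is zero or a nonzero multiple of a root. -/

open Submodule

theorem Submodule.span_pair_add_right_of_mem_span_singleton {R M : Type*} [Ring R]
    [AddCommGroup M] [Module R M] {v α w : M} (hw : w ∈ R ∙ v) :
    span R {v, α + w} = span R {v, α} := by
  have hv : ∀ {x : M}, v ∈ span R {v, x} := subset_span (Set.mem_insert _ _)
  have hx : ∀ {x : M}, x ∈ span R {v, x} := subset_span (Set.mem_insert_of_mem _ rfl)
  have hw' : ∀ {x : M}, w ∈ span R {v, x} := span_mono (by simp) hw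
  apply le_antisymm <;> rw [span_le, Set.insert_subset_iff, Set.singleton_subset_iff]
  · exact ⟨hv, add_mem hx hw'⟩
  · exact ⟨hv, by simpa using sub_mem (hx (x := α + w)) hw'⟩

theorem Submodule.inf_span_pair_eq_span_singleton {R M : Type*} [Ring R] [AddCommGroup M]
    [Module R M] {W : Submodule R M} {v α : M} (hα : α ∈ W) (hv : Disjoint W (R ∙ v)) :
    W ⊓ span R {v, α} = R ∙ α := by
  rw [span_insert, sup_comm, inf_comm,
    sup_inf_assoc_of_le _ ((span_singleton_le_iff_mem _ _).2 hα), inf_comm, hv.eq_bot, sup_bot_eq]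

theorem LinearIndependent.disjoint_span_pair_span_singleton {R M : Type*} [Semiring R]
    [AddCommMonoid M] [Module R M] {x y z : M} (h : LinearIndependent R ![x, y, z]) :
    Disjoint (span R {x, y}) (R ∙ z) := by
  simpa [Set.image_insert_eq] using h.disjoint_span_image (s := {0, 1}) (t := {2}) (by simp)

theorem span_intersection_of_rank_three_subsystem_general
    {V : Type*} [AddCommGroup V] [Module ℂ V]
    (Φ : Finset V)
    (γ₁ γ₂ γ₃ : V)
    (hindep : LinearIndependent ℂ ![γ₁, γ₂, γ₃])
    -- Ψ = Φ ∩ span{γ₁,γ₂,γ₃}; every root of Ψ is an integral combination of γ₁,γ₂,γ₃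
    (hint : ∀ ρ ∈ Φ, ρ ∈ Submodule.span ℂ {γ₁, γ₂, γ₃} →
      ∃ n₁ n₂ n₃ : ℤ, ρ = n₁ • γ₁ + n₂ • γ₂ + n₃ • γ₃)
    -- the hypothesis: for η = n₁γ₁+n₂γ₂+n₃γ₃ in Ψ, η − n₃γ₃ is proportional to a root
    (hprop : ∀ ρ ∈ Φ, ∀ n₁ n₂ n₃ : ℤ, ρ = n₁ • γ₁ + n₂ • γ₂ + n₃ • γ₃ →
      (n₁ • γ₁ + n₂ • γ₂ = 0) ∨ ∃ (c : ℂ) (σ : V), σ ∈ Φ ∧ c ≠ 0 ∧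
        n₁ • γ₁ + n₂ • γ₂ = c • σ) :
    ∀ η ∈ Φ, η ∈ Submodule.span ℂ {γ₁, γ₂, γ₃} →
      (Submodule.span ℂ {γ₁, γ₂} ⊓ Submodule.span ℂ {γ₃, η} = ⊥) ∨
      (∃ ρ ∈ Φ, Submodule.span ℂ {γ₁, γ₂} ⊓ Submodule.span ℂ {γ₃, η}
        = Submodule.span ℂ {ρ}) := by
  intro η hη hspan
  obtain ⟨n₁, n₂, n₃, hη_eq⟩ := hint η hη hspan
  have hα : n₁ • γ₁ + n₂ • γ₂ ∈ span ℂ {γ₁, γ₂} :=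
    add_mem (zsmul_mem (subset_span (by simp)) _) (zsmul_mem (subset_span (by simp)) _)
  have key : span ℂ {γ₁, γ₂} ⊓ span ℂ {γ₃, η} = ℂ ∙ (n₁ • γ₁ + n₂ • γ₂) := by
    rw [hη_eq, span_pair_add_right_of_mem_span_singleton (zsmul_mem (mem_span_singleton_self _) _),
      inf_span_pair_eq_span_singleton hα hindep.disjoint_span_pair_span_singleton]
  rcases hprop η hη n₁ n₂ n₃ hη_eq with h0 | ⟨c, σ, hσ, hc, hcσ⟩
  · exact Or.inl (by rw [key, h0, span_singleton_eq_bot])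
  · exact Or.inr ⟨σ, hσ, by rw [key, hcσ, span_singleton_smul_eq (IsUnit.mk0 c hc)]⟩

theorem span_intersection_of_rank_three_subsystem
    {V : Type*} [AddCommGroup V] [Module ℂ V]
    (Φ : Finset V) (hΦ0 : (0 : V) ∉ Φ)
    (γ₁ γ₂ γ₃ : V) (h1 : γ₁ ∈ Φ) (h2 : γ₂ ∈ Φ) (h3 : γ₃ ∈ Φ)
    (hindep : LinearIndependent ℂ ![γ₁, γ₂, γ₃])
    -- Ψ = Φ ∩ span{γ₁,γ₂,γ₃}; every root of Ψ is an integral combination of γ₁,γ₂,γ₃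
    (hint : ∀ ρ ∈ Φ, ρ ∈ Submodule.span ℂ {γ₁, γ₂, γ₃} →
      ∃ n₁ n₂ n₃ : ℤ, ρ = n₁ • γ₁ + n₂ • γ₂ + n₃ • γ₃)
    -- the hypothesis: for η = n₁γ₁+n₂γ₂+n₃γ₃ in Ψ, η − n₃γ₃ is proportional to a root
    (hprop : ∀ ρ ∈ Φ, ∀ n₁ n₂ n₃ : ℤ, ρ = n₁ • γ₁ + n₂ • γ₂ + n₃ • γ₃ →
      (n₁ • γ₁ + n₂ • γ₂ = 0) ∨ ∃ (c : ℂ) (σ : V), σ ∈ Φ ∧ c ≠ 0 ∧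
        n₁ • γ₁ + n₂ • γ₂ = c • σ) :
    ∀ η ∈ Φ, η ∈ Submodule.span ℂ {γ₁, γ₂, γ₃} →
      (Submodule.span ℂ {γ₁, γ₂} ⊓ Submodule.span ℂ {γ₃, η} = ⊥) ∨
      (∃ ρ ∈ Φ, Submodule.span ℂ {γ₁, γ₂} ⊓ Submodule.span ℂ {γ₃, η}
        = Submodule.span ℂ {ρ}) :=
  span_intersection_of_rank_three_subsystem_general Φ γ₁ γ₂ γ₃ hindep hint hprop
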